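/- arXiv:1005.1146 — 2 statements merged into one kernel-verified Lean document; each statement's English description precedes it below -/
import Mathlib

section
/- Fix ε > 0, a smooth compactly supported ū₁ : ℝ → ℝ, and a smooth b : ℝ → ℝ; write ū(x) = (ū₁(x₂),0). Let (η, u) with u = (u₁,u₂) be a C¹ solution on [0,T) × ℝ² of the scaled Saint-Venant–Coriolis system ∂ₜη + ε⁻¹∇·u + ū·∇η + ε²∇·(ηu) = 0, ∂ₜu + ε⁻²b(x₂)u^⊥ + ε⁻¹∇η + ū·∇u + u·∇ū + ε²u·∇u = 0, and assume 1 + ε³η(t,x) > 0 everywhere. Define u₀ := (2/ε³)(√(1+ε³η) − 1), so that η = [(1+ε³u₀/2)² − 1]/ε³. Then U := (u₀,u₁,u₂) is a C¹ solution of the symmetric system ε²∂ₜU + A(x₂,εD)U + ε³Q(U) = 0. Conversely, if U = (u₀,u₁,u₂) is a C¹ solution of ε²∂ₜU + A(x₂,εD)U + ε³Q(U) = 0 with 1 + ε³u₀/2 > 0 everywhere, then (η, u₁, u₂) with η := [(1+ε³u₀/2)² − 1]/ε³ solves the scaled Saint-Venant–Coriolis system. -/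
open MeasureTheory

noncomputable section

/-- partial derivative in the first space variable -/
def pd1 {E : Type*} [NormedAddCommGroup E] [NormedSpace ℝ E]
    (f : ℝ × ℝ → E) : ℝ × ℝ → E := fun x => fderiv ℝ f x (1, 0)

/-- partial derivative in the second space variable -/
def pd2 {E : Type*} [NormedAddCommGroup E] [NormedSpace ℝ E]
    (f : ℝ × ℝ → E) : ℝ × ℝ → E := fun x => fderiv ℝ f x (0, 1)

/-- time derivative of a time-dependent field -/
def dt (f : ℝ → ℝ × ℝ → ℝ) (t : ℝ) (x : ℝ × ℝ) : ℝ := deriv (fun s => f s x) t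

/-- `f` is C¹ as a function of `(t, x)` -/
def C1Field (f : ℝ → ℝ × ℝ → ℝ) : Prop :=
  ContDiff ℝ 1 (fun p : ℝ × (ℝ × ℝ) => f p.1 p.2)

/-- the scaled Saint-Venant–Coriolis system (2) at time `t`, point `x` -/
def SVSystem (ε : ℝ) (ub b : ℝ → ℝ) (η u₁ u₂ : ℝ → ℝ × ℝ → ℝ)
    (t : ℝ) (x : ℝ × ℝ) : Prop :=
  -- mass equation
  (dt η t x + ε⁻¹ * (pd1 (u₁ t) x + pd2 (u₂ t) x) + ub x.2 * pd1 (η t) x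
      + ε^2 * (pd1 (fun y => η t y * u₁ t y) x + pd2 (fun y => η t y * u₂ t y) x) = 0)
  -- first momentum equation (note (u^⊥)₁ = -u₂ and (u·∇ū)₁ = u₂ ū₁′)
  ∧ (dt u₁ t x + (ε^2)⁻¹ * b x.2 * (-(u₂ t x)) + ε⁻¹ * pd1 (η t) x
      + ub x.2 * pd1 (u₁ t) x + u₂ t x * deriv ub x.2
      + ε^2 * (u₁ t x * pd1 (u₁ t) x + u₂ t x * pd2 (u₁ t) x) = 0)
  -- second momentum equation
  ∧ (dt u₂ t x + (ε^2)⁻¹ * b x.2 * u₁ t x + ε⁻¹ * pd2 (η t) x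
      + ub x.2 * pd1 (u₂ t) x
      + ε^2 * (u₁ t x * pd1 (u₂ t) x + u₂ t x * pd2 (u₂ t) x) = 0)

/-- the symmetric system ε²∂ₜU + A(x₂,εD)U + ε³Q(U) = 0 at time `t`, point `x`,
written out componentwise with
`Q(U) = S₁(U) ε∂₁U + S₂(U) ε∂₂U`. -/
def SymSystem (ε : ℝ) (ub b : ℝ → ℝ) (u₀ u₁ u₂ : ℝ → ℝ × ℝ → ℝ)
    (t : ℝ) (x : ℝ × ℝ) : Prop :=
  -- zeroth component
  (ε^2 * dt u₀ t x
      + (ε^2 * ub x.2 * pd1 (u₀ t) x + ε * pd1 (u₁ t) x + ε * pd2 (u₂ t) x)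
      + ε^3 * (u₁ t x * (ε * pd1 (u₀ t) x) + (u₀ t x / 2) * (ε * pd1 (u₁ t) x)
          + u₂ t x * (ε * pd2 (u₀ t) x) + (u₀ t x / 2) * (ε * pd2 (u₂ t) x)) = 0)
  -- first component
  ∧ (ε^2 * dt u₁ t x
      + (ε * pd1 (u₀ t) x + ε^2 * ub x.2 * pd1 (u₁ t) x
          + (-(b x.2) + ε^2 * deriv ub x.2) * u₂ t x)
      + ε^3 * ((u₀ t x / 2) * (ε * pd1 (u₀ t) x) + u₁ t x * (ε * pd1 (u₁ t) x)
          + u₂ t x * (ε * pd2 (u₁ t) x)) = 0)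
  -- second component
  ∧ (ε^2 * dt u₂ t x
      + (ε * pd2 (u₀ t) x + b x.2 * u₁ t x + ε^2 * ub x.2 * pd1 (u₂ t) x)
      + ε^3 * (u₁ t x * (ε * pd1 (u₂ t) x) + (u₀ t x / 2) * (ε * pd2 (u₀ t) x)
          + u₂ t x * (ε * pd2 (u₂ t) x)) = 0)

lemma diffX {f : ℝ → ℝ × ℝ → ℝ} (h : C1Field f) (t : ℝ) (x : ℝ × ℝ) :
    DifferentiableAt ℝ (f t) x := by
  have hF : Differentiable ℝ (fun p : ℝ × (ℝ × ℝ) => f p.1 p.2) := h.differentiable one_ne_zero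
  exact (hF (t, x)).comp x (by fun_prop)

lemma diffT {f : ℝ → ℝ × ℝ → ℝ} (h : C1Field f) (t : ℝ) (x : ℝ × ℝ) :
    DifferentiableAt ℝ (fun s => f s x) t := by
  have hF : Differentiable ℝ (fun p : ℝ × (ℝ × ℝ) => f p.1 p.2) := h.differentiable one_ne_zero
  have e : (fun s => f s x) = (fun p : ℝ × (ℝ × ℝ) => f p.1 p.2) ∘ (fun s => (s, x)) := rfl
  rw [e]; exact (hF (t, x)).comp t (by fun_prop)

lemma pd_mul {f g : ℝ × ℝ → ℝ} {x : ℝ × ℝ} (hf : DifferentiableAt ℝ f x)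
    (hg : DifferentiableAt ℝ g x) (v : ℝ × ℝ) :
    fderiv ℝ (fun y => f y * g y) x v = fderiv ℝ f x v * g x + f x * fderiv ℝ g x v := by
  rw [fderiv_fun_mul hf hg]
  simp [ContinuousLinearMap.add_apply, ContinuousLinearMap.smul_apply, smul_eq_mul]
  ring

lemma eta_fd {ε : ℝ} {u₀ η : ℝ → ℝ × ℝ → ℝ} (h0 : C1Field u₀)
    (hη : ∀ t x, η t x = u₀ t x + ε^3 * (u₀ t x)^2 / 4) (t : ℝ) (x : ℝ × ℝ) (v : ℝ × ℝ) :
    fderiv ℝ (η t) x v = (1 + ε^3 * u₀ t x / 2) * fderiv ℝ (u₀ t) x v := by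
  have hg := (diffX h0 t x).hasFDerivAt
  have hfun : η t = fun y => u₀ t y + (ε^3/4) * (u₀ t y * u₀ t y) := by
    funext y; rw [hη]; ring
  have H : HasFDerivAt (η t)
      (fderiv ℝ (u₀ t) x + (ε^3/4) • (u₀ t x • fderiv ℝ (u₀ t) x + u₀ t x • fderiv ℝ (u₀ t) x)) x := by
    rw [hfun]; exact hg.add ((hg.mul hg).const_mul (ε^3/4))
  rw [H.fderiv]
  simp [ContinuousLinearMap.add_apply, ContinuousLinearMap.smul_apply, smul_eq_mul]
  ring

lemma eta_dt {ε : ℝ} {u₀ η : ℝ → ℝ × ℝ → ℝ} (h0 : C1Field u₀)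
    (hη : ∀ t x, η t x = u₀ t x + ε^3 * (u₀ t x)^2 / 4) (t : ℝ) (x : ℝ × ℝ) :
    dt η t x = (1 + ε^3 * u₀ t x / 2) * dt u₀ t x := by
  have hd : HasDerivAt (fun s => u₀ s x) (dt u₀ t x) t := (diffT h0 t x).hasDerivAt
  have hfun : (fun s => η s x) = fun s => u₀ s x + (ε^3/4) * (u₀ s x * u₀ s x) := by
    funext s; rw [hη]; ring
  have H : HasDerivAt (fun s => η s x)
      (dt u₀ t x + (ε^3/4) * (dt u₀ t x * u₀ t x + u₀ t x * dt u₀ t x)) t := by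
    rw [hfun]; exact hd.add ((hd.mul hd).const_mul (ε^3/4))
  show deriv (fun s => η s x) t = _
  rw [H.deriv]; ring

lemma eta_diffX {ε : ℝ} {u₀ η : ℝ → ℝ × ℝ → ℝ} (h0 : C1Field u₀)
    (hη : ∀ t x, η t x = u₀ t x + ε^3 * (u₀ t x)^2 / 4) (t : ℝ) (x : ℝ × ℝ) :
    DifferentiableAt ℝ (η t) x := by
  have hg := diffX h0 t x
  have hfun : η t = fun y => u₀ t y + (ε^3/4) * (u₀ t y * u₀ t y) := by
    funext y; rw [hη]; ring
  rw [hfun]; exact hg.add ((hg.mul hg).const_mul (ε^3/4))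
lemma cancel_left {c x : ℝ} (hc : c ≠ 0) (h : c * x = 0) : x = 0 :=
  (mul_eq_zero.mp h).resolve_left hc

lemma systems_iff (ε : ℝ) (hε : 0 < ε) (ub b : ℝ → ℝ) (u₀ u₁ u₂ η : ℝ → ℝ × ℝ → ℝ)
    (h0 : C1Field u₀) (h1 : C1Field u₁) (h2 : C1Field u₂)
    (hη : ∀ t x, η t x = u₀ t x + ε^3 * (u₀ t x)^2 / 4)
    (hm : ∀ t x, 0 < 1 + ε^3 * u₀ t x / 2) (t : ℝ) (x : ℝ × ℝ) :
    SVSystem ε ub b η u₁ u₂ t x ↔ SymSystem ε ub b u₀ u₁ u₂ t x := by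
  have hεne : ε ≠ 0 := hε.ne'
  have hmne : (1 + ε^3 * u₀ t x / 2) ≠ 0 := (hm t x).ne'
  have hc1 : ε * ε⁻¹ = 1 := mul_inv_cancel₀ hεne
  have hc2 : ε^2 * (ε^2)⁻¹ = 1 := mul_inv_cancel₀ (pow_ne_zero 2 hεne)
  have hdη := eta_diffX h0 hη t
  have hmul1 : pd1 (fun y => η t y * u₁ t y) x
      = pd1 (η t) x * u₁ t x + η t x * pd1 (u₁ t) x := pd_mul (hdη x) (diffX h1 t x) (1, 0)
  have hmul2 : pd2 (fun y => η t y * u₂ t y) x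
      = pd2 (η t) x * u₂ t x + η t x * pd2 (u₂ t) x := pd_mul (hdη x) (diffX h2 t x) (0, 1)
  have hp1 : pd1 (η t) x = (1 + ε^3 * u₀ t x / 2) * pd1 (u₀ t) x := eta_fd h0 hη t x (1, 0)
  have hp2 : pd2 (η t) x = (1 + ε^3 * u₀ t x / 2) * pd2 (u₀ t) x := eta_fd h0 hη t x (0, 1)
  have hdt : dt η t x = (1 + ε^3 * u₀ t x / 2) * dt u₀ t x := eta_dt h0 hη t x
  unfold SVSystem SymSystem
  rw [hmul1, hmul2, hdt, hp1, hp2, hη t x]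
  constructor
  · rintro ⟨e1, e2, e3⟩
    refine ⟨?_, ?_, ?_⟩
    · apply cancel_left (mul_ne_zero hεne hmne)
      linear_combination ε^3 * e1 - ε^2 * (pd1 (u₁ t) x + pd2 (u₂ t) x) * hc1
    · linear_combination ε^2 * e2 - ε * (1 + ε^3 * u₀ t x / 2) * pd1 (u₀ t) x * hc1
        + b x.2 * u₂ t x * hc2
    · linear_combination ε^2 * e3 - ε * (1 + ε^3 * u₀ t x / 2) * pd2 (u₀ t) x * hc1
        - b x.2 * u₁ t x * hc2
  · rintro ⟨e1, e2, e3⟩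
    refine ⟨?_, ?_, ?_⟩
    · apply cancel_left (pow_ne_zero 3 hεne)
      linear_combination ε * (1 + ε^3 * u₀ t x / 2) * e1
        + ε^2 * (pd1 (u₁ t) x + pd2 (u₂ t) x) * hc1
    · apply cancel_left (pow_ne_zero 2 hεne)
      linear_combination e2 + ε * (1 + ε^3 * u₀ t x / 2) * pd1 (u₀ t) x * hc1
        - b x.2 * u₂ t x * hc2
    · apply cancel_left (pow_ne_zero 2 hεne)
      linear_combination e3 + ε * (1 + ε^3 * u₀ t x / 2) * pd2 (u₀ t) x * hc1
        + b x.2 * u₁ t x * hc2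
/-- Equivalence between the scaled Saint-Venant–Coriolis system and
the symmetric system `ε²∂ₜU + A(x₂,εD)U + ε³Q(U) = 0` via the sound-speed variable
`u₀ = (2/ε³)(√(1+ε³η) − 1)`, i.e. `η = [(1+ε³u₀/2)² − 1]/ε³`. -/
theorem sv_symmetric_equivalence
    (ε T : ℝ) (hε : 0 < ε) (hT : 0 < T)
    (ub : ℝ → ℝ) (hub : ContDiff ℝ (⊤ : ℕ∞) ub) (hubc : HasCompactSupport ub)
    (b : ℝ → ℝ) (hb : ContDiff ℝ (⊤ : ℕ∞) b) :
    -- direct implication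
    (∀ η u₁ u₂ : ℝ → ℝ × ℝ → ℝ,
      C1Field η → C1Field u₁ → C1Field u₂ →
      (∀ t ∈ Set.Ico (0:ℝ) T, ∀ x : ℝ × ℝ, SVSystem ε ub b η u₁ u₂ t x) →
      (∀ t x, 0 < 1 + ε^3 * η t x) →
      ∀ u₀ : ℝ → ℝ × ℝ → ℝ,
        u₀ = (fun t x => (2 / ε^3) * (Real.sqrt (1 + ε^3 * η t x) - 1)) →
        ((∀ t x, η t x = ((1 + ε^3 * u₀ t x / 2)^2 - 1) / ε^3)
          ∧ C1Field u₀
          ∧ ∀ t ∈ Set.Ico (0:ℝ) T, ∀ x : ℝ × ℝ, SymSystem ε ub b u₀ u₁ u₂ t x))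
    ∧
    -- converse implication
    (∀ u₀ u₁ u₂ : ℝ → ℝ × ℝ → ℝ,
      C1Field u₀ → C1Field u₁ → C1Field u₂ →
      (∀ t ∈ Set.Ico (0:ℝ) T, ∀ x : ℝ × ℝ, SymSystem ε ub b u₀ u₁ u₂ t x) →
      (∀ t x, 0 < 1 + ε^3 * u₀ t x / 2) →
      ∀ η : ℝ → ℝ × ℝ → ℝ,
        η = (fun t x => ((1 + ε^3 * u₀ t x / 2)^2 - 1) / ε^3) →
        (C1Field η
          ∧ ∀ t ∈ Set.Ico (0:ℝ) T, ∀ x : ℝ × ℝ, SVSystem ε ub b η u₁ u₂ t x)) := by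
  have hεne : ε ≠ 0 := hε.ne'
  have hε3 : ε^3 ≠ 0 := pow_ne_zero 3 hεne
  constructor
  · -- direct implication
    intro η u₁ u₂ hηC h1 h2 hsv hpos u₀ hu₀
    subst hu₀
    have hsqrt : ∀ t x, 1 + ε^3 * ((2 / ε^3) * (Real.sqrt (1 + ε^3 * η t x) - 1)) / 2
        = Real.sqrt (1 + ε^3 * η t x) := by
      intro t x; field_simp; ring
    have hkey : ∀ t x, η t x
        = ((1 + ε^3 * ((2 / ε^3) * (Real.sqrt (1 + ε^3 * η t x) - 1)) / 2)^2 - 1) / ε^3 := by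
      intro t x
      rw [hsqrt t x, Real.sq_sqrt (hpos t x).le]
      field_simp
      ring
    have hηC' : ContDiff ℝ 1 (fun p : ℝ × (ℝ × ℝ) => η p.1 p.2) := hηC
    have hu0C : C1Field (fun t x => (2 / ε^3) * (Real.sqrt (1 + ε^3 * η t x) - 1)) := by
      show ContDiff ℝ 1 (fun p : ℝ × (ℝ × ℝ) =>
        (2 / ε^3) * (Real.sqrt (1 + ε^3 * η p.1 p.2) - 1))
      rw [contDiff_iff_contDiffAt]
      intro p
      have hin : ContDiffAt ℝ 1 (fun p : ℝ × (ℝ × ℝ) => 1 + ε^3 * η p.1 p.2) p := by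
        fun_prop
      have hs : ContDiffAt ℝ 1 Real.sqrt (1 + ε^3 * η p.1 p.2) :=
        Real.contDiffAt_sqrt (hpos p.1 p.2).ne'
      have hcomp : ContDiffAt ℝ 1 (fun p : ℝ × (ℝ × ℝ) => Real.sqrt (1 + ε^3 * η p.1 p.2)) p :=
        hs.comp p hin
      exact contDiffAt_const.mul (hcomp.sub contDiffAt_const)
    have hη' : ∀ t x, η t x
        = (fun t x => (2 / ε^3) * (Real.sqrt (1 + ε^3 * η t x) - 1)) t x
          + ε^3 * ((fun t x => (2 / ε^3) * (Real.sqrt (1 + ε^3 * η t x) - 1)) t x)^2 / 4 := by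
      intro t x
      rw [hkey t x]
      field_simp
      ring
    have hm : ∀ s y, 0 < 1 + ε^3 *
        ((fun t x => (2 / ε^3) * (Real.sqrt (1 + ε^3 * η t x) - 1)) s y) / 2 := by
      intro s y
      simpa [hsqrt s y] using Real.sqrt_pos.mpr (hpos s y)
    exact ⟨hkey, hu0C, fun t ht x =>
      (systems_iff ε hε ub b _ u₁ u₂ η hu0C h1 h2 hη' hm t x).mp (hsv t ht x)⟩
  · -- converse implication
    intro u₀ u₁ u₂ h0 h1 h2 hsym hm η hηdef
    subst hηdef
    have h0' : ContDiff ℝ 1 (fun p : ℝ × (ℝ × ℝ) => u₀ p.1 p.2) := h0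
    have hηC : C1Field (fun t x => ((1 + ε^3 * u₀ t x / 2)^2 - 1) / ε^3) := by
      show ContDiff ℝ 1 (fun p : ℝ × (ℝ × ℝ) => ((1 + ε^3 * u₀ p.1 p.2 / 2)^2 - 1) / ε^3)
      exact ((contDiff_const.add ((contDiff_const.mul h0').div_const 2)).pow 2).sub
        contDiff_const |>.div_const _
    have hη' : ∀ t x, (fun t x => ((1 + ε^3 * u₀ t x / 2)^2 - 1) / ε^3) t x
        = u₀ t x + ε^3 * (u₀ t x)^2 / 4 := by
      intro t x
      show ((1 + ε^3 * u₀ t x / 2)^2 - 1) / ε^3 = _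
      field_simp
      ring
    exact ⟨hηC, fun t ht x =>
      (systems_iff ε hε ub b u₀ u₁ u₂ _ h0 h1 h2 hη' hm t x).mpr (hsym t ht x)⟩

end
end

section
/- Fix ε > 0, a smooth compactly supported ū₁ : ℝ → ℝ and a smooth b : ℝ → ℝ with b and b′ of at most polynomial growth. For all Schwartz functions U = (u₀,u₁,u₂) and V = (v₀,v₁,v₂) from ℝ² to ℝ³, the linear propagator A = A(x₂,εD) satisfies the exact identity ⟨AU, V⟩_{L²(ℝ²;ℝ³)} + ⟨U, AV⟩_{L²(ℝ²;ℝ³)} = ε² ∫_{ℝ²} ū₁′(x₂) ( u₁(x) v₂(x) + u₂(x) v₁(x) ) dx. In particular A is skew-adjoint on L²(ℝ²;ℝ³) up to a bounded operator of size O(ε²). -/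
open MeasureTheory

noncomputable section

/-- the linear propagator `A(x₂, εD)` acting on `U = (u₀,u₁,u₂)` -/
def Aop (ε : ℝ) (ub b : ℝ → ℝ) (U : Fin 3 → ℝ × ℝ → ℝ) : Fin 3 → ℝ × ℝ → ℝ :=
  ![fun x => ε^2 * ub x.2 * pd1 (U 0) x + ε * pd1 (U 1) x + ε * pd2 (U 2) x,
    fun x => ε * pd1 (U 0) x + ε^2 * ub x.2 * pd1 (U 1) x
      + (-(b x.2) + ε^2 * deriv ub x.2) * U 2 x,
    fun x => ε * pd2 (U 0) x + b x.2 * U 1 x + ε^2 * ub x.2 * pd1 (U 2) x]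

namespace SkewAux

open SchwartzMap

lemma schwartz_htg (g : 𝓢(ℝ × ℝ, ℝ)) : Function.HasTemperateGrowth ⇑g := by
  refine ⟨g.smooth', fun n => ⟨0, SchwartzMap.seminorm ℝ 0 n g, fun x => ?_⟩⟩
  simpa using g.norm_iteratedFDeriv_le_seminorm ℝ n x

/-- pointwise product of two Schwartz functions, as a Schwartz function -/
def mulS (f g : 𝓢(ℝ × ℝ, ℝ)) : 𝓢(ℝ × ℝ, ℝ) :=
  bilinLeftCLM (ContinuousLinearMap.mul ℝ ℝ) (schwartz_htg g) f

@[simp] lemma mulS_apply (f g : 𝓢(ℝ × ℝ, ℝ)) (x : ℝ × ℝ) : mulS f g x = f x * g x := rfl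

def pdS1 (f : 𝓢(ℝ × ℝ, ℝ)) : 𝓢(ℝ × ℝ, ℝ) := LineDeriv.lineDerivOpCLM ℝ 𝓢(ℝ × ℝ, ℝ) ((1:ℝ), (0:ℝ)) f
def pdS2 (f : 𝓢(ℝ × ℝ, ℝ)) : 𝓢(ℝ × ℝ, ℝ) := LineDeriv.lineDerivOpCLM ℝ 𝓢(ℝ × ℝ, ℝ) ((0:ℝ), (1:ℝ)) f

lemma pd1_eq (f : 𝓢(ℝ × ℝ, ℝ)) : pd1 ⇑f = ⇑(pdS1 f) := rfl
lemma pd2_eq (f : 𝓢(ℝ × ℝ, ℝ)) : pd2 ⇑f = ⇑(pdS2 f) := rfl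

lemma pd1_add (f g : 𝓢(ℝ × ℝ, ℝ)) (x : ℝ × ℝ) :
    pd1 ⇑(f + g) x = pd1 ⇑f x + pd1 ⇑g x := by
  simp only [pd1_eq]; simp [pdS1, map_add]

lemma pd2_add (f g : 𝓢(ℝ × ℝ, ℝ)) (x : ℝ × ℝ) :
    pd2 ⇑(f + g) x = pd2 ⇑f x + pd2 ⇑g x := by
  simp only [pd2_eq]; simp [pdS2, map_add]

lemma pd1_mulS (f g : 𝓢(ℝ × ℝ, ℝ)) (x : ℝ × ℝ) :
    pd1 ⇑(mulS f g) x = pd1 ⇑f x * g x + f x * pd1 ⇑g x := by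
  have h : ⇑(mulS f g) = fun y => f y * g y := rfl
  simp only [pd1, h, fderiv_fun_mul f.differentiableAt g.differentiableAt,
    ContinuousLinearMap.add_apply, ContinuousLinearMap.coe_smul', Pi.smul_apply, smul_eq_mul]
  ring

lemma pd2_mulS (f g : 𝓢(ℝ × ℝ, ℝ)) (x : ℝ × ℝ) :
    pd2 ⇑(mulS f g) x = pd2 ⇑f x * g x + f x * pd2 ⇑g x := by
  have h : ⇑(mulS f g) = fun y => f y * g y := rfl
  simp only [pd2, h, fderiv_fun_mul f.differentiableAt g.differentiableAt,
    ContinuousLinearMap.add_apply, ContinuousLinearMap.coe_smul', Pi.smul_apply, smul_eq_mul]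
  ring

lemma htg_slice1 (c : ℝ) :
    Function.HasTemperateGrowth (fun t : ℝ => ((t, c) : ℝ × ℝ)) := by
  refine Function.HasTemperateGrowth.of_fderiv ?_
    (differentiable_id.prodMk (differentiable_const c)) (k := 1) (C := 1 + |c|) (fun t => ?_)
  · have h : (fderiv ℝ (fun t : ℝ => ((t, c) : ℝ × ℝ)))
        = fun _ : ℝ => ((ContinuousLinearMap.id ℝ ℝ).prod (0 : ℝ →L[ℝ] ℝ)) := by
      funext t
      exact ((hasFDerivAt_id t).prodMk (hasFDerivAt_const c t)).fderiv
    rw [h]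
    exact Function.HasTemperateGrowth.const _
  · have h : ‖((t, c) : ℝ × ℝ)‖ = max ‖t‖ ‖c‖ := rfl
    rw [h]
    have h1 : ‖t‖ ≤ (1 + |c|) * (1 + ‖t‖) ^ 1 := by
      have := abs_nonneg c; have := norm_nonneg t; nlinarith
    have h2 : ‖c‖ ≤ (1 + |c|) * (1 + ‖t‖) ^ 1 := by
      have h3 : ‖c‖ = |c| := rfl
      nlinarith [abs_nonneg c, norm_nonneg t]
    exact max_le h1 h2

lemma htg_slice2 (c : ℝ) :
    Function.HasTemperateGrowth (fun t : ℝ => ((c, t) : ℝ × ℝ)) := by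
  refine Function.HasTemperateGrowth.of_fderiv ?_
    ((differentiable_const c).prodMk differentiable_id) (k := 1) (C := 1 + |c|) (fun t => ?_)
  · have h : (fderiv ℝ (fun t : ℝ => ((c, t) : ℝ × ℝ)))
        = fun _ : ℝ => ((0 : ℝ →L[ℝ] ℝ).prod (ContinuousLinearMap.id ℝ ℝ)) := by
      funext t
      exact ((hasFDerivAt_const c t).prodMk (hasFDerivAt_id t)).fderiv
    rw [h]
    exact Function.HasTemperateGrowth.const _
  · have h : ‖((c, t) : ℝ × ℝ)‖ = max ‖c‖ ‖t‖ := rfl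
    rw [h]
    have h1 : ‖t‖ ≤ (1 + |c|) * (1 + ‖t‖) ^ 1 := by
      have := abs_nonneg c; have := norm_nonneg t; nlinarith
    have h2 : ‖c‖ ≤ (1 + |c|) * (1 + ‖t‖) ^ 1 := by
      have h3 : ‖c‖ = |c| := rfl
      nlinarith [abs_nonneg c, norm_nonneg t]
    exact max_le h2 h1

def sliceCLM1 (c : ℝ) : 𝓢(ℝ × ℝ, ℝ) →L[ℝ] 𝓢(ℝ, ℝ) :=
  compCLM ℝ (htg_slice1 c) ⟨1, 1, fun t => by
    have h : ‖t‖ ≤ ‖((t, c) : ℝ × ℝ)‖ := le_max_left _ _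
    simp only [pow_one, one_mul]; linarith [norm_nonneg ((t, c) : ℝ × ℝ)]⟩

def sliceCLM2 (c : ℝ) : 𝓢(ℝ × ℝ, ℝ) →L[ℝ] 𝓢(ℝ, ℝ) :=
  compCLM ℝ (htg_slice2 c) ⟨1, 1, fun t => by
    have h : ‖t‖ ≤ ‖((c, t) : ℝ × ℝ)‖ := le_max_right _ _
    simp only [pow_one, one_mul]; linarith [norm_nonneg ((c, t) : ℝ × ℝ)]⟩

lemma sliceCLM1_apply (c : ℝ) (f : 𝓢(ℝ × ℝ, ℝ)) (t : ℝ) : sliceCLM1 c f t = f (t, c) := rfl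
lemma sliceCLM2_apply (c : ℝ) (f : 𝓢(ℝ × ℝ, ℝ)) (t : ℝ) : sliceCLM2 c f t = f (c, t) := rfl

lemma int1_slice (f : 𝓢(ℝ × ℝ, ℝ)) (c : ℝ) : (∫ t : ℝ, pd1 ⇑f (t, c)) = 0 := by
  have hderiv : ∀ t : ℝ, HasDerivAt (fun s : ℝ => f (s, c)) (pd1 ⇑f (t, c)) t := by
    intro t
    have h1 : HasDerivAt (fun s : ℝ => ((s, c) : ℝ × ℝ)) (((1:ℝ), (0:ℝ)) : ℝ × ℝ) t :=
      (hasDerivAt_id t).prodMk (hasDerivAt_const t c)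
    exact (f.differentiableAt.hasFDerivAt.comp_hasDerivAt t h1)
  have hf : Integrable (fun t : ℝ => f (t, c)) := by
    have h : (fun t : ℝ => f (t, c)) = ⇑(sliceCLM1 c f) := by
      funext t; rw [sliceCLM1_apply]
    rw [h]; exact (sliceCLM1 c f).integrable
  have hf' : Integrable (fun t : ℝ => pd1 ⇑f (t, c)) := by
    have h : (fun t : ℝ => pd1 ⇑f (t, c)) = ⇑(sliceCLM1 c (pdS1 f)) := by
      funext t; rw [sliceCLM1_apply, pd1_eq]
    rw [h]; exact (sliceCLM1 c (pdS1 f)).integrable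
  exact integral_eq_zero_of_hasDerivAt_of_integrable hderiv hf' hf

lemma int2_slice (f : 𝓢(ℝ × ℝ, ℝ)) (c : ℝ) : (∫ t : ℝ, pd2 ⇑f (c, t)) = 0 := by
  have hderiv : ∀ t : ℝ, HasDerivAt (fun s : ℝ => f (c, s)) (pd2 ⇑f (c, t)) t := by
    intro t
    have h1 : HasDerivAt (fun s : ℝ => ((c, s) : ℝ × ℝ)) (((0:ℝ), (1:ℝ)) : ℝ × ℝ) t :=
      (hasDerivAt_const t c).prodMk (hasDerivAt_id t)
    exact (f.differentiableAt.hasFDerivAt.comp_hasDerivAt t h1)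
  have hf : Integrable (fun t : ℝ => f (c, t)) := by
    have h : (fun t : ℝ => f (c, t)) = ⇑(sliceCLM2 c f) := by
      funext t; rw [sliceCLM2_apply]
    rw [h]; exact (sliceCLM2 c f).integrable
  have hf' : Integrable (fun t : ℝ => pd2 ⇑f (c, t)) := by
    have h : (fun t : ℝ => pd2 ⇑f (c, t)) = ⇑(sliceCLM2 c (pdS2 f)) := by
      funext t; rw [sliceCLM2_apply, pd2_eq]
    rw [h]; exact (sliceCLM2 c (pdS2 f)).integrable
  exact integral_eq_zero_of_hasDerivAt_of_integrable hderiv hf' hf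

lemma integrable_wmul (w : ℝ → ℝ) (hw : Continuous w) (C : ℝ) (hC : ∀ y, |w y| ≤ C)
    (f : 𝓢(ℝ × ℝ, ℝ)) : Integrable (fun x : ℝ × ℝ => w x.2 * f x) :=
  f.integrable.bdd_mul ((hw.comp continuous_snd).aestronglyMeasurable) (ae_of_all _ fun x => hC x.2)

lemma integral_wmul_pd1 (w : ℝ → ℝ) (hw : Continuous w) (C : ℝ) (hC : ∀ y, |w y| ≤ C)
    (f : 𝓢(ℝ × ℝ, ℝ)) : (∫ x : ℝ × ℝ, w x.2 * pd1 ⇑f x) = 0 := by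
  have hint : Integrable (fun x : ℝ × ℝ => w x.2 * pd1 ⇑f x) := by
    rw [pd1_eq]; exact integrable_wmul w hw C hC (pdS1 f)
  rw [Measure.volume_eq_prod] at hint ⊢
  rw [integral_prod_symm _ hint]
  have h : ∀ y : ℝ, (∫ x : ℝ, w y * pd1 ⇑f (x, y)) = 0 := by
    intro y
    rw [integral_const_mul, int1_slice]
    simp
  simp only [h, integral_zero]

lemma integral_pd1 (f : 𝓢(ℝ × ℝ, ℝ)) : (∫ x : ℝ × ℝ, pd1 ⇑f x) = 0 := by
  have h := integral_wmul_pd1 (fun _ => (1:ℝ)) continuous_const 1 (fun y => by norm_num) f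
  simpa using h

lemma integral_pd2 (f : 𝓢(ℝ × ℝ, ℝ)) : (∫ x : ℝ × ℝ, pd2 ⇑f x) = 0 := by
  have hint : Integrable (pd2 ⇑f) (volume : Measure (ℝ × ℝ)) := by
    rw [pd2_eq]; exact (pdS2 f).integrable
  rw [Measure.volume_eq_prod] at hint ⊢
  rw [integral_prod _ hint]
  have h : ∀ x : ℝ, (∫ y : ℝ, pd2 ⇑f (x, y)) = 0 := fun x => int2_slice f x
  simp only [h, integral_zero]

lemma integrable_poly_mul (b : ℝ → ℝ) (hb : Continuous b) (C : ℝ) (n : ℕ)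
    (hC : ∀ y, |b y| ≤ C * (1 + |y|) ^ n) (f : 𝓢(ℝ × ℝ, ℝ)) :
    Integrable (fun x : ℝ × ℝ => b x.2 * f x) := by
  have hC0 : 0 ≤ C := by
    have h := hC 0
    simp only [abs_zero, add_zero, one_pow, mul_one] at h
    exact le_trans (abs_nonneg _) h
  have key : ∀ x : ℝ × ℝ, ‖b x.2 * f x‖ ≤ C * 2 ^ n * (‖f x‖ + ‖x‖ ^ n * ‖f x‖) := by
    intro x
    have h2 : |x.2| ≤ ‖x‖ := norm_snd_le x
    have h3 : (1 + |x.2|) ^ n ≤ 2 ^ n * (1 + ‖x‖ ^ n) := by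
      have hm : (1 + |x.2|) ≤ 2 * max 1 ‖x‖ := by
        rcases le_total ‖x‖ 1 with h | h
        · rw [max_eq_left h]; linarith
        · rw [max_eq_right h]; linarith
      calc (1 + |x.2|) ^ n ≤ (2 * max 1 ‖x‖) ^ n :=
            pow_le_pow_left₀ (by positivity) hm n
        _ = 2 ^ n * (max 1 ‖x‖) ^ n := by rw [mul_pow]
        _ ≤ 2 ^ n * (1 + ‖x‖ ^ n) := by
            have : (max 1 ‖x‖) ^ n ≤ 1 + ‖x‖ ^ n := by
              rcases le_total ‖x‖ 1 with h | h
              · rw [max_eq_left h, one_pow]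
                nlinarith [pow_nonneg (norm_nonneg x) n]
              · rw [max_eq_right h]; nlinarith [pow_nonneg (norm_nonneg x) n]
            have h2n : (0:ℝ) ≤ 2 ^ n := by positivity
            nlinarith
    have hb2 : |b x.2| ≤ C * (1 + |x.2|) ^ n := hC x.2
    have hfx : (0:ℝ) ≤ ‖f x‖ := norm_nonneg _
    calc ‖b x.2 * f x‖ = |b x.2| * ‖f x‖ := by rw [norm_mul]; rfl
      _ ≤ C * (1 + |x.2|) ^ n * ‖f x‖ := by
          apply mul_le_mul_of_nonneg_right hb2 hfx
      _ ≤ C * (2 ^ n * (1 + ‖x‖ ^ n)) * ‖f x‖ := by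
          apply mul_le_mul_of_nonneg_right _ hfx
          exact mul_le_mul_of_nonneg_left h3 hC0
      _ = C * 2 ^ n * (‖f x‖ + ‖x‖ ^ n * ‖f x‖) := by ring
  refine Integrable.mono'
    (((f.integrable.norm.add (f.integrable_pow_mul volume n)).const_mul (C * 2 ^ n)))
    (((hb.comp continuous_snd).mul f.continuous).aestronglyMeasurable)
    (ae_of_all _ fun x => ?_)
  simpa using key x

end SkewAux

open SkewAux SchwartzMap

/-- Exact skew-adjointness identity for the linear propagator:
`⟨AU,V⟩_{L²} + ⟨U,AV⟩_{L²} = ε² ∫ ū₁′(x₂)(u₁v₂ + u₂v₁) dx` for Schwartz `U, V`. -/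
theorem Aop_skew_adjoint_identity
    (ε : ℝ) (hε : 0 < ε)
    (ub : ℝ → ℝ) (hub : ContDiff ℝ (⊤ : ℕ∞) ub) (hubc : HasCompactSupport ub)
    (b : ℝ → ℝ) (hb : ContDiff ℝ (⊤ : ℕ∞) b)
    (hbpoly : ∃ (C : ℝ) (n : ℕ), ∀ y : ℝ,
      |b y| ≤ C * (1 + |y|)^n ∧ |deriv b y| ≤ C * (1 + |y|)^n)
    (U V : Fin 3 → SchwartzMap (ℝ × ℝ) ℝ) :
    (∫ x : ℝ × ℝ, ∑ j, Aop ε ub b (fun i => ⇑(U i)) j x * V j x)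
      + (∫ x : ℝ × ℝ, ∑ j, U j x * Aop ε ub b (fun i => ⇑(V i)) j x)
      = ε^2 * ∫ x : ℝ × ℝ, deriv ub x.2 * (U 1 x * V 2 x + U 2 x * V 1 x) := by
  obtain ⟨Cb, n, hCb⟩ := hbpoly
  have hbc : Continuous b := hb.continuous
  have hubcont : Continuous ub := hub.continuous
  have hub' : Continuous (deriv ub) := hub.continuous_deriv (by simp)
  obtain ⟨Cu, hCu⟩ : ∃ C, ∀ y, |ub y| ≤ C := by
    obtain ⟨C, hC⟩ := hubc.exists_bound_of_continuous hubcont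
    exact ⟨C, fun y => by simpa using hC y⟩
  obtain ⟨Cu', hCu'⟩ : ∃ C, ∀ y, |deriv ub y| ≤ C := by
    obtain ⟨C, hC⟩ := (hubc.deriv).exists_bound_of_continuous hub'
    exact ⟨C, fun y => by simpa using hC y⟩
  -- generic integrability of the normal form
  have key_int : ∀ (A B Cc D : 𝓢(ℝ × ℝ, ℝ)), Integrable
      (fun x : ℝ × ℝ => ub x.2 * A x + b x.2 * B x + deriv ub x.2 * Cc x + D x) := by
    intro A B Cc D
    exact (((integrable_wmul ub hubcont Cu hCu A).add
      (integrable_poly_mul b hbc Cb n (fun y => (hCb y).1) B)).add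
      (integrable_wmul _ hub' Cu' hCu' Cc)).add D.integrable
  -- normal form of the first integrand
  have e1 : (fun x : ℝ × ℝ => ∑ j, Aop ε ub b (fun i => ⇑(U i)) j x * V j x)
      = fun x : ℝ × ℝ =>
        ub x.2 * ((ε^2 • (mulS (pdS1 (U 0)) (V 0) + mulS (pdS1 (U 1)) (V 1)
            + mulS (pdS1 (U 2)) (V 2))) x)
        + b x.2 * ((mulS (U 1) (V 2) - mulS (U 2) (V 1)) x)
        + deriv ub x.2 * ((ε^2 • mulS (U 2) (V 1)) x)
        + ((ε • (mulS (pdS1 (U 1)) (V 0) + mulS (pdS2 (U 2)) (V 0)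
            + mulS (pdS1 (U 0)) (V 1) + mulS (pdS2 (U 0)) (V 2))) x) := by
    funext x
    simp only [Aop, Fin.sum_univ_three, Matrix.cons_val_zero, Matrix.cons_val_one,
      Matrix.head_cons, Matrix.cons_val_two, Matrix.tail_cons, smul_apply, smul_eq_mul,
      sub_apply, add_apply, mulS_apply, ← pd1_eq, ← pd2_eq]
    ring
  have e2 : (fun x : ℝ × ℝ => ∑ j, U j x * Aop ε ub b (fun i => ⇑(V i)) j x)
      = fun x : ℝ × ℝ =>
        ub x.2 * ((ε^2 • (mulS (U 0) (pdS1 (V 0)) + mulS (U 1) (pdS1 (V 1))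
            + mulS (U 2) (pdS1 (V 2)))) x)
        + b x.2 * ((mulS (U 2) (V 1) - mulS (U 1) (V 2)) x)
        + deriv ub x.2 * ((ε^2 • mulS (U 1) (V 2)) x)
        + ((ε • (mulS (U 0) (pdS1 (V 1)) + mulS (U 0) (pdS2 (V 2))
            + mulS (U 1) (pdS1 (V 0)) + mulS (U 2) (pdS2 (V 0)))) x) := by
    funext x
    simp only [Aop, Fin.sum_univ_three, Matrix.cons_val_zero, Matrix.cons_val_one,
      Matrix.head_cons, Matrix.cons_val_two, Matrix.tail_cons, smul_apply, smul_eq_mul,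
      sub_apply, add_apply, mulS_apply, ← pd1_eq, ← pd2_eq]
    ring
  have hi1 : Integrable (fun x : ℝ × ℝ => ∑ j, Aop ε ub b (fun i => ⇑(U i)) j x * V j x) := by
    rw [e1]; exact key_int _ _ _ _
  have hi2 : Integrable (fun x : ℝ × ℝ => ∑ j, U j x * Aop ε ub b (fun i => ⇑(V i)) j x) := by
    rw [e2]; exact key_int _ _ _ _
  -- Schwartz combinations for the integration by parts
  set P : 𝓢(ℝ × ℝ, ℝ) := mulS (U 0) (V 0) + mulS (U 1) (V 1) + mulS (U 2) (V 2) with hP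
  set Q : 𝓢(ℝ × ℝ, ℝ) := mulS (U 0) (V 1) + mulS (U 1) (V 0) with hQ
  set R : 𝓢(ℝ × ℝ, ℝ) := mulS (U 0) (V 2) + mulS (U 2) (V 0) with hR
  set S : 𝓢(ℝ × ℝ, ℝ) := mulS (U 1) (V 2) + mulS (U 2) (V 1) with hS
  -- pointwise identity for the sum of the two integrands
  have e3 : (fun x : ℝ × ℝ => (∑ j, Aop ε ub b (fun i => ⇑(U i)) j x * V j x)
        + ∑ j, U j x * Aop ε ub b (fun i => ⇑(V i)) j x)
      = fun x : ℝ × ℝ => ε^2 * (ub x.2 * pd1 ⇑P x) + (ε * pd1 ⇑Q x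
          + (ε * pd2 ⇑R x + ε^2 * (deriv ub x.2 * S x))) := by
    funext x
    simp only [hP, hQ, hR, hS, pd1_add, pd2_add, pd1_mulS, pd2_mulS, Aop, Fin.sum_univ_three,
      Matrix.cons_val_zero, Matrix.cons_val_one, Matrix.head_cons, Matrix.cons_val_two,
      Matrix.tail_cons, add_apply, mulS_apply]
    ring
  -- integrability of the four pieces
  have h1 : Integrable (fun x : ℝ × ℝ => ε^2 * (ub x.2 * pd1 ⇑P x)) := by
    rw [pd1_eq]
    exact (integrable_wmul ub hubcont Cu hCu (pdS1 P)).const_mul _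
  have h2 : Integrable (fun x : ℝ × ℝ => ε * pd1 ⇑Q x) := by
    rw [pd1_eq]
    exact ((pdS1 Q).integrable).const_mul _
  have h3 : Integrable (fun x : ℝ × ℝ => ε * pd2 ⇑R x) := by
    rw [pd2_eq]
    exact ((pdS2 R).integrable).const_mul _
  have h4 : Integrable (fun x : ℝ × ℝ => ε^2 * (deriv ub x.2 * S x)) :=
    (integrable_wmul _ hub' Cu' hCu' S).const_mul _
  -- put everything together
  have h34 : Integrable (fun x : ℝ × ℝ =>
      ε * pd2 ⇑R x + ε^2 * (deriv ub x.2 * S x)) := h3.add h4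
  have h234 : Integrable (fun x : ℝ × ℝ =>
      ε * pd1 ⇑Q x + (ε * pd2 ⇑R x + ε^2 * (deriv ub x.2 * S x))) := h2.add h34
  rw [← integral_add hi1 hi2, e3, integral_add h1 h234, integral_add h2 h34,
    integral_add h3 h4]
  rw [integral_const_mul (ε^2), integral_wmul_pd1 ub hubcont Cu hCu P]
  rw [integral_const_mul ε, integral_pd1 Q]
  rw [integral_const_mul ε, integral_pd2 R]
  rw [integral_const_mul (ε^2)]
  have hSx : (∫ x : ℝ × ℝ, deriv ub x.2 * S x)
      = ∫ x : ℝ × ℝ, deriv ub x.2 * (U 1 x * V 2 x + U 2 x * V 1 x) := rfl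
  rw [hSx]
  ring

end
end
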